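/- Let r : ℝ → S_X be a natural parameterization of the unit sphere of a smooth 2-dimensional Banach space X with phase shift φ. If φ is Lipschitz at all but countably many points of ℝ, then the derivative r' = r∘φ is locally absolutely continuous (i.e., X is absolutely smooth). -/

import Mathlib

open Metric Set Function Module

/-- `f` is Lipschitz at the point `s`: there is a constant `C` with
`|f(s+ε)-f(s)| ≤ C|ε| + o(ε)` for small `ε`. -/
def LipschitzPtAt (f : ℝ → ℝ) (s : ℝ) : Prop :=
  ∃ C : ℝ, ∀ η : ℝ, 0 < η → ∃ δ : ℝ, 0 < δ ∧ ∀ ε : ℝ, |ε| < δ →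
    |f (s + ε) - f s| ≤ C * |ε| + η * |ε|

/-- `f` is absolutely continuous on the interval `[a, b]`. -/
def AbsContOn {X : Type*} [NormedAddCommGroup X] (f : ℝ → X) (a b : ℝ) : Prop :=
  ∀ η : ℝ, 0 < η → ∃ δ : ℝ, 0 < δ ∧ ∀ n : ℕ, ∀ x y : Fin n → ℝ,
    (∀ i, a ≤ x i ∧ x i < y i ∧ y i ≤ b) →
    (∀ i j : Fin n, i < j → y i ≤ x j) →
    (∑ i, (y i - x i)) < δ → (∑ i, ‖f (y i) - f (x i)‖) < η

/-- `f` is locally absolutely continuous. -/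
def LocAbsCont {X : Type*} [NormedAddCommGroup X] (f : ℝ → X) : Prop :=
  ∀ s : ℝ, ∃ a b : ℝ, a < s ∧ s < b ∧ AbsContOn f a b

/-- `φ` is the phase shift of the natural parameterization `r`. -/
def IsPhaseShift {X : Type*} [NormedAddCommGroup X] [NormedSpace ℝ X]
    (r : ℝ → X) (φ : ℝ → ℝ) : Prop :=
  ∀ s : ℝ, s < φ s ∧ deriv r s = r (φ s) ∧ ∀ t : ℝ, s < t → deriv r s = r t → φ s ≤ t

/-!
Sort the points where `φ` is Lipschitz by an integer bound `n` on the Lipschitz constant. Around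
such a point the Stieltjes measure `dφ` of a small closed ball is at most `n` times its length, so
by Besicovitch's covering theorem `dφ ≤ n • volume` on the `n`-th piece; the remaining countable
set carries no `dφ`-mass because `φ` is continuous. Hence `dφ ≪ volume`, which makes `φ`
absolutely continuous on every interval, and `r' = r ∘ φ` inherits this because `r` is
`1`-Lipschitz.
-/

open MeasureTheory Filter Topology ENNReal NNReal

theorem LipschitzPtAt.exists_nat_eventually_le {f : ℝ → ℝ} {x : ℝ} (hf : LipschitzPtAt f x) :
    ∃ n : ℕ, ∀ᶠ ε in 𝓝 (0 : ℝ), |f (x + ε) - f x| ≤ n * |ε| := by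
  obtain ⟨C, hC⟩ := hf
  obtain ⟨δ, hδ, hCδ⟩ := hC 1 one_pos
  obtain ⟨n, hn⟩ := exists_nat_ge (C + 1)
  refine ⟨n, ?_⟩
  filter_upwards [ball_mem_nhds (0 : ℝ) hδ] with ε hε
  rw [mem_ball_zero_iff, Real.norm_eq_abs] at hε
  calc |f (x + ε) - f x| ≤ C * |ε| + 1 * |ε| := hCδ ε hε
    _ = (C + 1) * |ε| := by ring
    _ ≤ n * |ε| := by gcongr

theorem pairwise_disjoint_Ioc_of_le {ι α : Type*} [LinearOrder ι] [LinearOrder α] {x y : ι → α}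
    (h : ∀ i j, i < j → y i ≤ x j) : Pairwise (Disjoint on fun i => Ioc (x i) (y i)) := by
  intro i j hij
  rcases hij.lt_or_gt with hlt | hlt
  · exact Ioc_disjoint_Ioc_of_le (h i j hlt)
  · exact (Ioc_disjoint_Ioc_of_le (h j i hlt)).symm

theorem MeasureTheory.Measure.AbsolutelyContinuous.exists_pos_forall_measure_lt {α : Type*}
    [MeasurableSpace α] {μ ν : Measure α} [IsFiniteMeasure μ] [SigmaFinite ν] (h : μ ≪ ν)
    {ε : ℝ≥0∞} (hε : ε ≠ 0) : ∃ δ > 0, ∀ s, MeasurableSet s → ν s < δ → μ s < ε := by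
  obtain ⟨δ, hδ, hδε⟩ :=
    exists_pos_setLIntegral_lt_of_measure_lt (Measure.lintegral_rnDeriv_lt_top μ ν).ne hε
  exact ⟨δ, hδ, fun s hs hνs => Measure.setLIntegral_rnDeriv' h hs ▸ hδε s hνs⟩

theorem LipschitzWith.absContOn_comp {X : Type*} [NormedAddCommGroup X] {g : ℝ → X} {K : ℝ≥0}
    (hg : LipschitzWith K g) {f : ℝ → ℝ} {a b : ℝ} (hf : AbsContOn f a b) :
    AbsContOn (g ∘ f) a b := by
  intro η hη
  obtain ⟨δ, hδ, hfδ⟩ := hf (η / (K + 1)) (by positivity)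
  refine ⟨δ, hδ, fun n x y hxy hord hsum => ?_⟩
  have hstep : ∀ u v, ‖g u - g v‖ ≤ (K + 1) * ‖u - v‖ := fun u v => by
    rw [← dist_eq_norm, ← dist_eq_norm]
    exact (hg.dist_le_mul u v).trans (by gcongr; linarith)
  calc ∑ i, ‖(g ∘ f) (y i) - (g ∘ f) (x i)‖ ≤ ∑ i, (K + 1) * ‖f (y i) - f (x i)‖ :=
        Finset.sum_le_sum fun i _ => hstep _ _
    _ = (K + 1) * ∑ i, ‖f (y i) - f (x i)‖ := Finset.mul_sum ..|>.symm
    _ < (K + 1) * (η / (K + 1)) := by gcongr; exact hfδ n x y hxy hord hsum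
    _ = η := mul_div_cancel₀ _ (by positivity)

namespace StieltjesFunction

variable (F : StieltjesFunction ℝ)

theorem measure_Icc_of_continuous (hF : Continuous F) (a b : ℝ) :
    F.measure (Icc a b) = ENNReal.ofReal (F b - F a) := by
  rw [F.measure_Icc, hF.continuousWithinAt.leftLim_eq]

theorem measure_iUnion_Ioc {ι : Type*} [Fintype ι] {x y : ι → ℝ} (hxy : ∀ i, x i ≤ y i)
    (hdisj : Pairwise (Disjoint on fun i => Ioc (x i) (y i))) :
    F.measure (⋃ i, Ioc (x i) (y i)) = ENNReal.ofReal (∑ i, (F (y i) - F (x i))) := by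
  rw [measure_iUnion hdisj fun _ => measurableSet_Ioc, tsum_fintype,
    ofReal_sum_of_nonneg fun i _ => sub_nonneg.2 (F.mono (hxy i))]
  exact Finset.sum_congr rfl fun i _ => F.measure_Ioc _ _

theorem eventually_measure_closedBall_le {x : ℝ} {L : ℝ≥0} (hF : Continuous F)
    (hx : ∀ᶠ ε in 𝓝 (0 : ℝ), |F (x + ε) - F x| ≤ L * |ε|) :
    ∀ᶠ r in 𝓝[>] (0 : ℝ), F.measure (closedBall x r) ≤ (L • volume) (closedBall x r) := by
  have hx_neg := (continuous_neg.tendsto' (0 : ℝ) 0 neg_zero).eventually hx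
  filter_upwards [nhdsWithin_le_nhds (hx.and hx_neg), self_mem_nhdsWithin]
    with r ⟨hr_right, hr_left⟩ (hr : 0 < r)
  rw [abs_neg, abs_of_pos hr, ← sub_eq_add_neg, abs_le] at hr_left
  rw [abs_of_pos hr, abs_le] at hr_right
  rw [Real.closedBall_eq_Icc, F.measure_Icc_of_continuous hF, Measure.smul_apply, Real.volume_Icc,
    ENNReal.smul_def, smul_eq_mul, ← ofReal_coe_nnreal, ← ofReal_mul L.coe_nonneg]
  exact ofReal_le_ofReal (by linarith)

theorem measure_le_smul_volume {s : Set ℝ} {L : ℝ≥0} (hF : Continuous F)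
    (hs : ∀ x ∈ s, ∀ᶠ ε in 𝓝 (0 : ℝ), |F (x + ε) - F x| ≤ L * |ε|) :
    F.measure s ≤ (L • volume) s :=
  (Besicovitch.vitaliFamily F.measure).measure_le_of_frequently_le _ Measure.AbsolutelyContinuous.rfl
    s fun x hx => (Besicovitch.tendsto_filterAt F.measure x).frequently
      (F.eventually_measure_closedBall_le hF (hs x hx)).frequently

theorem absolutelyContinuous_of_countable_not_lipschitzPtAt (hF : Continuous F)
    (hcnt : {x | ¬ LipschitzPtAt F x}.Countable) : F.measure ≪ volume := by
  have : NullSingletonClass F.measure := ⟨fun x => by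
    rw [F.measure_singleton, hF.continuousWithinAt.leftLim_eq, sub_self, ofReal_zero]⟩
  let E : ℕ → Set ℝ := fun n => {x | ∀ᶠ ε in 𝓝 (0 : ℝ), |F (x + ε) - F x| ≤ n * |ε|}
  refine Measure.AbsolutelyContinuous.mk fun s _ hs =>
    measure_mono_null (t := {x | ¬ LipschitzPtAt F x} ∪ ⋃ n, s ∩ E n) (fun x hx => ?_) ?_
  · by_cases h : LipschitzPtAt F x
    · obtain ⟨n, hn⟩ := h.exists_nat_eventually_le
      exact Or.inr (mem_iUnion.2 ⟨n, hx, hn⟩)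
    · exact Or.inl h
  refine measure_union_null (hcnt.measure_zero _) (measure_iUnion_null fun n => ?_)
  refine nonpos_iff_eq_zero.1 ?_
  calc F.measure (s ∩ E n) ≤ ((n : ℝ≥0) • volume) (s ∩ E n) :=
        F.measure_le_smul_volume hF fun x hx => by simpa [E] using hx.2
    _ = 0 := by rw [Measure.smul_apply, measure_mono_null inter_subset_left hs, smul_zero]

theorem absContOn_of_absolutelyContinuous (hF : F.measure ≪ volume) (a b : ℝ) :
    AbsContOn F a b := by
  intro η hη
  have : IsFiniteMeasure (F.measure.restrict (Icc a b)) :=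
    isFiniteMeasure_restrict.2 measure_Icc_lt_top.ne
  obtain ⟨δ, hδ, hδη⟩ := ((hF.restrict (Icc a b)).trans
    (Measure.absolutelyContinuous_of_le Measure.restrict_le_self)).exists_pos_forall_measure_lt
    (ofReal_pos.2 hη).ne'
  have hδ_ne_top : min δ 1 ≠ ∞ := (min_lt_of_right_lt one_lt_top).ne
  refine ⟨(min δ 1).toReal, toReal_pos (lt_min hδ one_pos).ne' hδ_ne_top,
    fun n x y hxy hord hsum => ?_⟩
  have hxy_le : ∀ i, x i ≤ y i := fun i => (hxy i).2.1.le
  have hdisj := pairwise_disjoint_Ioc_of_le hord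
  have hvol : volume (⋃ i, Ioc (x i) (y i)) < δ := by
    rw [Real.volume_eq_stieltjes_id, StieltjesFunction.id.measure_iUnion_Ioc hxy_le hdisj]
    calc ENNReal.ofReal (∑ i, (y i - x i)) < ENNReal.ofReal (min δ 1).toReal :=
          (ofReal_lt_ofReal_iff (toReal_pos (lt_min hδ one_pos).ne' hδ_ne_top)).2 hsum
      _ ≤ δ := (ofReal_toReal hδ_ne_top).trans_le (min_le_left _ _)
  have hsub : ⋃ i, Ioc (x i) (y i) ⊆ Icc a b :=
    iUnion_subset fun i z hz => ⟨(hxy i).1.trans hz.1.le, hz.2.trans (hxy i).2.2⟩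
  have hmeas := hδη _ (MeasurableSet.iUnion fun _ => measurableSet_Ioc) hvol
  rw [Measure.restrict_apply (MeasurableSet.iUnion fun _ => measurableSet_Ioc),
    inter_eq_self_of_subset_left hsub,
    F.measure_iUnion_Ioc hxy_le hdisj, ofReal_lt_ofReal_iff hη] at hmeas
  calc ∑ i, ‖F (y i) - F (x i)‖ = ∑ i, (F (y i) - F (x i)) := Finset.sum_congr rfl fun i _ => by
        rw [Real.norm_eq_abs, abs_of_nonneg (sub_nonneg.2 (F.mono (hxy_le i)))]
    _ < η := hmeas

end StieltjesFunction

theorem absolutely_smooth_of_phase_shift_lipschitz_cocountable_general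
    (X : Type*) [NormedAddCommGroup X] [NormedSpace ℝ X]
    (r : ℝ → X) (hr : ContDiff ℝ 1 r)
    (hdr : ∀ s, ‖deriv r s‖ = 1)
    (φ : ℝ → ℝ) (hφ : IsPhaseShift r φ)
    (hφc : Continuous φ) (hφm : Monotone φ)
    (hcnt : {s : ℝ | ¬ LipschitzPtAt φ s}.Countable) :
    LocAbsCont (deriv r) := by
  let F : StieltjesFunction ℝ := ⟨φ, hφm, fun _ => hφc.continuousWithinAt⟩
  have hF : F.measure ≪ volume := F.absolutelyContinuous_of_countable_not_lipschitzPtAt hφc hcnt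
  have hlip : LipschitzWith 1 r := lipschitzWith_of_nnnorm_deriv_le (hr.differentiable one_ne_zero)
    fun s => by rw [← NNReal.coe_le_coe, coe_nnnorm, hdr s, NNReal.coe_one]
  have hderiv : deriv r = r ∘ φ := funext fun s => (hφ s).2.1
  intro s
  exact ⟨s - 1, s + 1, by linarith, by linarith,
    hderiv ▸ hlip.absContOn_comp (F.absContOn_of_absolutelyContinuous hF _ _)⟩

theorem absolutely_smooth_of_phase_shift_lipschitz_cocountable
    (X : Type*) [NormedAddCommGroup X] [NormedSpace ℝ X]
    (hdim : finrank ℝ X = 2)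
    (hsmooth : ∀ x : X, x ≠ 0 → DifferentiableAt ℝ (fun y : X => ‖y‖) x)
    (r : ℝ → X) (hr : ContDiff ℝ 1 r)
    (hr1 : ∀ s, ‖r s‖ = 1) (hdr : ∀ s, ‖deriv r s‖ = 1)
    (φ : ℝ → ℝ) (hφ : IsPhaseShift r φ)
    (hφc : Continuous φ) (hφm : Monotone φ)
    (hcnt : {s : ℝ | ¬ LipschitzPtAt φ s}.Countable) :
    LocAbsCont (deriv r) :=
  absolutely_smooth_of_phase_shift_lipschitz_cocountable_general X r hr hdr φ hφ hφc hφm hcnt
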